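/- Let Q(y) = ∫_y^∞ (2π)^{−1/2} e^{−t²/2} dt. Then for all A ≥ 0 and B ≥ 0, ∫_0^A ∫_0^B (2π)^{−1/2} e^{−(x+y)²/2} dx dy = A Q(A) + B Q(B) − (A + B) Q(A + B) + (1/√(2π)) (1 − e^{−A²/2} − e^{−B²/2} + e^{−(A+B)²/2}). -/

import Mathlib

open Real MeasureTheory

/-- The standard Gaussian tail function `Q(y) = ∫_y^∞ (2π)^{−1/2} e^{−t²/2} dt`. -/
noncomputable def gaussQ (y : ℝ) : ℝ :=
  ∫ t in Set.Ioi y, (2 * Real.pi) ^ (-(1 : ℝ) / 2) * Real.exp (-t ^ 2 / 2)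

namespace Stmt18Aux

noncomputable def phi (y : ℝ) : ℝ := (2 * Real.pi) ^ (-(1 : ℝ) / 2) * Real.exp (-y ^ 2 / 2)

lemma phi_cont : Continuous phi := by
  unfold phi; fun_prop

lemma phi_integrable : Integrable phi := by
  have h : Integrable (fun y : ℝ => Real.exp (-(2⁻¹ : ℝ) * y ^ 2)) :=
    integrable_exp_neg_mul_sq (by norm_num)
  have := h.const_mul ((2 * Real.pi) ^ (-(1 : ℝ) / 2))
  refine this.congr ?_
  filter_upwards with y
  unfold phi
  ring_nf

lemma Q_split (a b : ℝ) (hab : a ≤ b) :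
    gaussQ a = (∫ t in a..b, phi t) + gaussQ b := by
  have h : (∫ t in Set.Ioi a, phi t) =
      (∫ t in Set.Ioc a b, phi t) + ∫ t in Set.Ioi b, phi t := by
    rw [← MeasureTheory.setIntegral_union (Set.Ioc_disjoint_Ioi le_rfl) measurableSet_Ioi
      (phi_integrable.integrableOn) (phi_integrable.integrableOn),
      Set.Ioc_union_Ioi_eq_Ioi hab]
  rw [intervalIntegral.integral_of_le hab]
  exact h

lemma Q_eq (y : ℝ) : gaussQ y = gaussQ 0 - ∫ t in (0 : ℝ)..y, phi t := by
  rcases le_total 0 y with h | h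
  · rw [Q_split 0 y h]; ring
  · rw [Q_split y 0 h, intervalIntegral.integral_symm]; ring

lemma hQ (y : ℝ) : HasDerivAt gaussQ (-(phi y)) y := by
  have h : HasDerivAt (fun y => ∫ t in (0 : ℝ)..y, phi t) (phi y) y :=
    intervalIntegral.integral_hasDerivAt_right (phi_cont.intervalIntegrable _ _)
      (phi_cont.stronglyMeasurableAtFilter _ _) phi_cont.continuousAt
  have : HasDerivAt (fun y => gaussQ 0 - ∫ t in (0 : ℝ)..y, phi t) (-(phi y)) y :=
    (h.const_sub _)
  exact this.congr_of_eventuallyEq (by filter_upwards with z using (Q_eq z))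

lemma Q_cont : Continuous gaussQ :=
  continuous_iff_continuousAt.2 fun y => (hQ y).continuousAt

lemma hphi (y : ℝ) : HasDerivAt phi (-y * phi y) y := by
  have h1 : HasDerivAt (fun y : ℝ => -y ^ 2 / 2) (-y) y := by
    have := ((hasDerivAt_pow 2 y).neg).div_const 2
    refine this.congr_deriv ?_; push_cast; ring
  have := (h1.exp).const_mul ((2 * Real.pi) ^ (-(1 : ℝ) / 2))
  refine this.congr_deriv ?_
  unfold phi; ring

lemma inner_int (y B : ℝ) (hB : 0 ≤ B) :
    (∫ x in (0 : ℝ)..B, phi (x + y)) = gaussQ y - gaussQ (y + B) := by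
  rw [intervalIntegral.integral_comp_add_right (fun t => phi t) y, zero_add]
  rw [Q_split y (B + y) (by linarith)]
  rw [show y + B = B + y by ring]
  ring

end Stmt18Aux

/-- `∫_0^A ∫_0^B (2π)^{−1/2} e^{−(x+y)²/2} dx dy
      = A Q(A) + B Q(B) − (A+B) Q(A+B) + (1/√(2π))(1 − e^{−A²/2} − e^{−B²/2} + e^{−(A+B)²/2})`. -/
theorem stmt18 (A B : ℝ) (hA : 0 ≤ A) (hB : 0 ≤ B) :
    (∫ y in (0 : ℝ)..A, ∫ x in (0 : ℝ)..B,
        (2 * Real.pi) ^ (-(1 : ℝ) / 2) * Real.exp (-(x + y) ^ 2 / 2)) =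
      A * gaussQ A + B * gaussQ B - (A + B) * gaussQ (A + B) +
        (1 / Real.sqrt (2 * Real.pi)) *
          (1 - Real.exp (-A ^ 2 / 2) - Real.exp (-B ^ 2 / 2) + Real.exp (-(A + B) ^ 2 / 2)) := by
  open Stmt18Aux in
  have hinner : ∀ y : ℝ, (∫ x in (0 : ℝ)..B,
      (2 * Real.pi) ^ (-(1 : ℝ) / 2) * Real.exp (-(x + y) ^ 2 / 2))
      = gaussQ y - gaussQ (y + B) := fun y => inner_int y B hB
  rw [intervalIntegral.integral_congr (g := fun y => gaussQ y - gaussQ (y + B))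
    (fun y _ => hinner y)]
  -- FTC with antiderivative G
  set G : ℝ → ℝ := fun y => y * gaussQ y - phi y - ((B + y) * gaussQ (B + y) - phi (B + y))
    with hG
  have hGderiv : ∀ y : ℝ, HasDerivAt G (gaussQ y - gaussQ (y + B)) y := by
    intro y
    have h1 : HasDerivAt (fun y => y * gaussQ y - phi y) (gaussQ y) y := by
      have := ((hasDerivAt_id y).mul (hQ y)).sub (hphi y)
      refine this.congr_deriv ?_; simp
    have h2 : HasDerivAt (fun y => (B + y) * gaussQ (B + y) - phi (B + y))
        (gaussQ (B + y)) y := by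
      have hb : HasDerivAt (fun y : ℝ => B + y) 1 y := (hasDerivAt_id y).const_add B
      have := ((HasDerivAt.comp y
        (by exact (fun z => (hasDerivAt_id z).mul (hQ z) |>.sub (hphi z)) (B + y)) hb))
      have h' := this
      simp only [mul_one] at h'
      refine h'.congr_deriv ?_
      simp; ring
    have := h1.sub h2
    refine this.congr_deriv ?_
    rw [show y + B = B + y by ring]
  rw [intervalIntegral.integral_eq_sub_of_hasDerivAt (fun y _ => hGderiv y)
    ((Q_cont.sub (Q_cont.comp (by fun_prop))).intervalIntegrable _ _)]
  have hc : (2 * Real.pi) ^ (-(1 : ℝ) / 2) = 1 / Real.sqrt (2 * Real.pi) := by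
    rw [Real.sqrt_eq_rpow, one_div, ← Real.rpow_neg (by positivity)]
    norm_num
  have hphi0 : phi 0 = 1 / Real.sqrt (2 * Real.pi) := by
    unfold phi; simp [hc]
  simp only [hG]
  unfold phi
  rw [hc]
  push_cast
  ring_nf
  rw [Real.exp_zero]
  ring
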